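/- Let a_1, …, a_n ∈ ℝ with a_1² + ⋯ + a_n² > 0, set r = √(a_1² + ⋯ + a_n²) and S_a = a_1 e_1 + ⋯ + a_n e_n ∈ Cl(n). Then Cl(n) = ker(M_{S_a} − r) ⊕ ker(M_{S_a} + r), where M_{S_a} is right multiplication by S_a, and these eigenspaces are the left ideals Cl(n)(r + S_a) and Cl(n)(−r + S_a). -/
import Mathlib


open scoped BigOperators

/-- `Cl n`: the real Clifford algebra of the standard positive definite quadratic form on `ℝⁿ`. -/
noncomputable abbrev Cl (n : ℕ) : Type :=
  CliffordAlgebra (QuadraticMap.weightedSumSquares ℝ (fun _ : Fin n => (1 : ℝ)))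

/-- The orthonormal generators `e i` of `Cl n`, satisfying `e i ^ 2 = 1`, `e i * e j = - e j * e i`. -/
noncomputable def e (n : ℕ) (i : Fin n) : Cl n :=
  CliffordAlgebra.ι _ (Pi.single i 1)

/-- `S = e 1 + ⋯ + e n`. -/
noncomputable def S (n : ℕ) : Cl n := ∑ i, e n i


/-- For `S_a = a₁e₁ + ⋯ + aₙeₙ` with `r = √(Σ aᵢ²) > 0`, `Cl n` is the direct sum of the
`r`- and `(-r)`-eigenspaces of right multiplication by `S_a`, and these are the left ideals
`Cl(n)(r + S_a)` and `Cl(n)(-r + S_a)`. -/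
theorem weighted_eigenspace_decomposition (n : ℕ) (a : Fin n → ℝ)
    (ha : 0 < ∑ i, a i ^ 2) (r : ℝ) (hr : r = Real.sqrt (∑ i, a i ^ 2))
    (Sa : Cl n) (hSa : Sa = ∑ i, a i • e n i) :
    IsCompl
      (LinearMap.ker (LinearMap.mulRight ℝ Sa - r • LinearMap.id))
      (LinearMap.ker (LinearMap.mulRight ℝ Sa + r • LinearMap.id)) ∧
    LinearMap.ker (LinearMap.mulRight ℝ Sa - r • LinearMap.id)
      = LinearMap.range (LinearMap.mulRight ℝ (r • (1 : Cl n) + Sa)) ∧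
    LinearMap.ker (LinearMap.mulRight ℝ Sa + r • LinearMap.id)
      = LinearMap.range (LinearMap.mulRight ℝ ((-r) • (1 : Cl n) + Sa)) := by
  have hrpos : 0 < r := by rw [hr]; exact Real.sqrt_pos.mpr ha
  have hr2 : r ^ 2 = ∑ i, a i ^ 2 := by rw [hr, Real.sq_sqrt ha.le]
  have hv : Sa = CliffordAlgebra.ι _ a := by
    rw [hSa]
    simp only [e, ← map_smul, ← map_sum]
    congr 1
    funext j
    simp [Finset.sum_apply, Pi.single_apply]
  have hSq : Sa * Sa = (r ^ 2) • (1 : Cl n) := by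
    rw [hv, CliffordAlgebra.ι_sq_scalar, Algebra.algebraMap_eq_smul_one]
    congr 1
    rw [hr2, QuadraticMap.weightedSumSquares_apply]
    simp [sq, smul_eq_mul]
  have memK1 : ∀ x : Cl n,
      x ∈ LinearMap.ker (LinearMap.mulRight ℝ Sa - r • LinearMap.id) ↔ x * Sa = r • x := by
    intro x
    simp [LinearMap.mem_ker, sub_eq_zero]
  have memK2 : ∀ x : Cl n,
      x ∈ LinearMap.ker (LinearMap.mulRight ℝ Sa + r • LinearMap.id) ↔ x * Sa = -(r • x) := by
    intro x
    simp [LinearMap.mem_ker, add_eq_zero_iff_eq_neg]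
  have hplus : ∀ y : Cl n, (y * (r • (1:Cl n) + Sa)) * Sa = r • (y * (r • (1:Cl n) + Sa)) := by
    intro y
    rw [mul_assoc, add_mul, smul_mul_assoc, one_mul, hSq, mul_add, mul_smul_comm, mul_smul_comm,
      mul_one, mul_add, mul_smul_comm, mul_one]
    module
  have hminus : ∀ y : Cl n,
      (y * ((-r) • (1:Cl n) + Sa)) * Sa = -(r • (y * ((-r) • (1:Cl n) + Sa))) := by
    intro y
    rw [mul_assoc, add_mul, smul_mul_assoc, one_mul, hSq, mul_add, mul_smul_comm, mul_smul_comm,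
      mul_one, mul_add, mul_smul_comm, mul_one]
    module
  have h2r : (2 * r) ≠ 0 := by positivity
  refine ⟨?_, ?_, ?_⟩
  · constructor
    · rw [Submodule.disjoint_def]
      intro x hx1 hx2
      rw [memK1] at hx1
      rw [memK2] at hx2
      have h3 : (r + r) • x = 0 := by
        rw [add_smul]
        nth_rewrite 2 [← hx1]
        rw [hx2]
        simp
      have hrr : r + r ≠ 0 := by positivity
      simpa [hrr] using h3
    · rw [codisjoint_iff, eq_top_iff]
      intro x _
      rw [Submodule.mem_sup]
      refine ⟨(2 * r)⁻¹ • (x * (r • (1:Cl n) + Sa)), ?_,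
        (-(2 * r)⁻¹) • (x * ((-r) • (1:Cl n) + Sa)), ?_, ?_⟩
      · rw [memK1, smul_mul_assoc, hplus, smul_comm]
      · rw [memK2, smul_mul_assoc, hminus, smul_neg, smul_comm]
      · simp only [mul_add, mul_smul_comm, mul_one]
        match_scalars <;> field_simp <;> ring_nf
  · ext x
    rw [memK1, LinearMap.mem_range]
    constructor
    · intro hx
      refine ⟨(2 * r)⁻¹ • x, ?_⟩
      rw [LinearMap.mulRight_apply, smul_mul_assoc]
      simp only [mul_add, mul_smul_comm, mul_one, hx]
      match_scalars
      field_simp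
      ring
    · rintro ⟨y, rfl⟩
      rw [LinearMap.mulRight_apply]
      exact hplus y
  · ext x
    rw [memK2, LinearMap.mem_range]
    constructor
    · intro hx
      refine ⟨(-(2 * r)⁻¹) • x, ?_⟩
      rw [LinearMap.mulRight_apply, smul_mul_assoc]
      simp only [mul_add, mul_smul_comm, mul_one, hx]
      match_scalars
      field_simp
      ring
    · rintro ⟨y, rfl⟩
      rw [LinearMap.mulRight_apply]
      exact hminus y
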